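/- arXiv:0902.4156 — 3 statements merged into one kernel-verified Lean document; each statement's English description precedes it below -/
import Mathlib

section
/- Let ε = 1 or ε = -1, let a, b, c : ℝ × ℝ → ℝ be smooth, let ξ : ℝ → ℝ be smooth with ξ(t) ≠ 0 for all t, and let F : ℝ × ℝ → ℝ be a smooth function of (y,t) satisfying ε ∂y² F + a(y,t) ∂y F + ξ''(t)/ξ(t) = 0 for all (y,t). Then the function u(x,y,t) := (ξ'(t)/ξ(t)) x + F(y,t) satisfies the CGB equation with f ≡ 0: ∂x(∂t u + u ∂x u + ∂x² u) + ε ∂y² u + a(y,t) ∂y u + b(y,t) ∂x ∂y u + c(y,t) ∂x² u = 0 for all (x,y,t). -/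
/-- Partial derivative in the first (`x`) variable. -/
noncomputable def pdx (u : ℝ → ℝ → ℝ → ℝ) : ℝ → ℝ → ℝ → ℝ :=
  fun x y t => deriv (fun s => u s y t) x

/-- Partial derivative in the second (`y`) variable. -/
noncomputable def pdy (u : ℝ → ℝ → ℝ → ℝ) : ℝ → ℝ → ℝ → ℝ :=
  fun x y t => deriv (fun s => u x s t) y

/-- Partial derivative in the third (`t`) variable. -/
noncomputable def pdt (u : ℝ → ℝ → ℝ → ℝ) : ℝ → ℝ → ℝ → ℝ :=
  fun x y t => deriv (fun s => u x y s) t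

/-- Partial derivative of a function of two variables in its first variable. -/
noncomputable def pfst (F : ℝ → ℝ → ℝ) : ℝ → ℝ → ℝ :=
  fun z t => deriv (fun s => F s t) z

/-!
The ansatz is affine in `x` with slope `g = ξ'/ξ`, so every `x`-derivative in the equation is
read off as a slope: `∂ₓu = g`, `∂ₓ²u = ∂ₓ∂ᵧu = 0`, and `∂ₜu + u ∂ₓu` has slope `g' + g²`.
The Riccati identity `g' + g² = ξ''/ξ` for the logarithmic derivative then turns the equation
into the hypothesis on `F`.
-/

theorem deriv_logDeriv_add_sq {𝕜 : Type*} [NontriviallyNormedField 𝕜] {f : 𝕜 → 𝕜} {t : 𝕜}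
    (hf : DifferentiableAt 𝕜 f t) (hf' : DifferentiableAt 𝕜 (deriv f) t) (h0 : f t ≠ 0) :
    deriv (logDeriv f) t + logDeriv f t ^ 2 = deriv (deriv f) t / f t := by
  have hderiv : HasDerivAt (logDeriv f)
      ((deriv (deriv f) t * f t - deriv f t * deriv f t) / f t ^ 2) t :=
    hf'.hasDerivAt.div hf.hasDerivAt h0
  rw [hderiv.deriv, logDeriv_apply]
  field_simp
  ring

theorem pdx_eq_of_affine {w : ℝ → ℝ → ℝ → ℝ} {y t p q : ℝ} (hw : ∀ x, w x y t = p * x + q)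
    (x : ℝ) : pdx w x y t = p := by
  have hline : HasDerivAt (fun s => p * s + q) p x := by
    simpa using ((hasDerivAt_id x).const_mul p).add_const q
  simpa only [pdx, hw] using hline.deriv

theorem pdy_eq_pfst_of_eq_add {w : ℝ → ℝ → ℝ → ℝ} {F : ℝ → ℝ → ℝ} {x t q : ℝ}
    (hw : ∀ y, w x y t = q + F y t) (y : ℝ) : pdy w x y t = pfst F y t := by
  simp only [pdy, pfst, hw, deriv_const_add]

theorem stmt6_general (ε : ℝ)
    (a b c : ℝ × ℝ → ℝ)
    (ξ : ℝ → ℝ) (hξ : ContDiff ℝ (⊤ : ℕ∞) ξ) (hξ0 : ∀ t, ξ t ≠ 0)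
    (F : ℝ → ℝ → ℝ)
    (hF : ContDiff ℝ (⊤ : ℕ∞) (fun p : ℝ × ℝ => F p.1 p.2))
    (hFeq : ∀ y t : ℝ,
      ε * pfst (pfst F) y t + a (y, t) * pfst F y t + deriv (deriv ξ) t / ξ t = 0)
    (u : ℝ → ℝ → ℝ → ℝ)
    (hudef : ∀ x y t, u x y t = deriv ξ t / ξ t * x + F y t) :
    ∀ x y t : ℝ,
      pdx (fun x y t => pdt u x y t + u x y t * pdx u x y t + pdx (pdx u) x y t) x y t
        + ε * pdy (pdy u) x y t + a (y, t) * pdy u x y t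
        + b (y, t) * pdx (pdy u) x y t + c (y, t) * pdx (pdx u) x y t = 0 := by
  intro x y t
  have hξ' : ContDiff ℝ (⊤ : ℕ∞) (deriv ξ) := (contDiff_infty_iff_deriv.mp hξ).2
  have hFt : DifferentiableAt ℝ (fun s => F y s) t :=
    (hF.comp (contDiff_const.prodMk contDiff_id)).differentiable (by simp) t
  have hg : DifferentiableAt ℝ (logDeriv ξ) t := (hξ'.div hξ hξ0).differentiable (by simp) t
  have hu : ∀ x y t, u x y t = logDeriv ξ t * x + F y t := hudef
  have hux : ∀ x y t, pdx u x y t = logDeriv ξ t := fun x y t => pdx_eq_of_affine (hu · y t) x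
  have huxx : ∀ x y t, pdx (pdx u) x y t = 0 :=
    fun x y t => pdx_eq_of_affine (fun x => by rw [hux]; ring) x
  have huy : ∀ x y t, pdy u x y t = pfst F y t :=
    fun x y t => pdy_eq_pfst_of_eq_add (hu x · t) y
  have huyy : pdy (pdy u) x y t = pfst (pfst F) y t :=
    pdy_eq_pfst_of_eq_add (fun y => by rw [huy, zero_add]) y
  have huxy : pdx (pdy u) x y t = 0 := pdx_eq_of_affine (fun x => by rw [huy]; ring) x
  have hut : ∀ x, pdt u x y t = deriv (logDeriv ξ) t * x + deriv (fun s => F y s) t := by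
    intro x
    simp only [pdt, hu]
    exact ((hg.hasDerivAt.mul_const x).add hFt.hasDerivAt).deriv
  have hinner : pdx (fun x y t => pdt u x y t + u x y t * pdx u x y t + pdx (pdx u) x y t) x y t
      = deriv (logDeriv ξ) t + logDeriv ξ t ^ 2 :=
    pdx_eq_of_affine (q := deriv (fun s => F y s) t + F y t * logDeriv ξ t)
      (fun x => by rw [hut, hu, hux, huxx]; ring) x
  rw [hinner, huyy, huy, huxy, huxx, deriv_logDeriv_add_sq (hξ.differentiable (by simp) t)
    (hξ'.differentiable (by simp) t) (hξ0 t)]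
  linear_combination hFeq y t

theorem stmt6 (ε : ℝ) (hε : ε = 1 ∨ ε = -1)
    (a b c : ℝ × ℝ → ℝ)
    (ha : ContDiff ℝ (⊤ : ℕ∞) a) (hb : ContDiff ℝ (⊤ : ℕ∞) b)
    (hc : ContDiff ℝ (⊤ : ℕ∞) c)
    (ξ : ℝ → ℝ) (hξ : ContDiff ℝ (⊤ : ℕ∞) ξ) (hξ0 : ∀ t, ξ t ≠ 0)
    (F : ℝ → ℝ → ℝ)
    (hF : ContDiff ℝ (⊤ : ℕ∞) (fun p : ℝ × ℝ => F p.1 p.2))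
    (hFeq : ∀ y t : ℝ,
      ε * pfst (pfst F) y t + a (y, t) * pfst F y t + deriv (deriv ξ) t / ξ t = 0)
    (u : ℝ → ℝ → ℝ → ℝ)
    (hudef : ∀ x y t, u x y t = deriv ξ t / ξ t * x + F y t) :
    ∀ x y t : ℝ,
      pdx (fun x y t => pdt u x y t + u x y t * pdx u x y t + pdx (pdx u) x y t) x y t
        + ε * pdy (pdy u) x y t + a (y, t) * pdy u x y t
        + b (y, t) * pdx (pdy u) x y t + c (y, t) * pdx (pdx u) x y t = 0 :=
  stmt6_general ε a b c ξ hξ hξ0 F hF hFeq u hudef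
end

section
/- Let ε = 1 or ε = -1, let b, c, ξ : ℝ → ℝ be smooth, let η : ℝ → ℝ be smooth with η(t) ≠ 0 and η'(t) = b(t) η(t) for all t, and let β : ℝ → ℝ be smooth with β'(t) = −ε ξ(t)²/η(t)² for all t. If F : ℝ × ℝ → ℝ is smooth and satisfies ∂z(∂t F + F ∂z F + ∂z² F) = 2 ε c(t) for all (z,t), then the function u(x,y,t) := −c(t) y² + (ξ'(t)/η(t)) y + F(x − (ξ(t)/η(t)) y + β(t), t) satisfies ∂x(∂t u + u ∂x u + ∂x² u) + ε ∂y² u + b(t) y ∂x ∂y u + c(t) y² ∂x² u = 0 for all (x,y,t). -/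
/-- Partial derivative of a function of two variables `(z,t)` in the first variable `z`. -/
noncomputable def pz (F : ℝ → ℝ → ℝ) : ℝ → ℝ → ℝ :=
  fun z t => deriv (fun s => F s t) z

/-- Partial derivative of a function of two variables `(z,t)` in the second variable `t`. -/
noncomputable def pt (F : ℝ → ℝ → ℝ) : ℝ → ℝ → ℝ :=
  fun z t => deriv (fun s => F z s) t

open Function
open scoped ContDiff

noncomputable def burgersOperator (F : ℝ → ℝ → ℝ) : ℝ → ℝ → ℝ :=
  fun z t => pt F z t + F z t * pz F z t + pz (pz F) z t

section PartialDerivatives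

variable {F : ℝ → ℝ → ℝ}

lemma hasDerivAt_uncurry_comp_fderiv {φ ψ : ℝ → ℝ} {φ' ψ' s : ℝ}
    (hF : DifferentiableAt ℝ (uncurry F) (φ s, ψ s))
    (hφ : HasDerivAt φ φ' s) (hψ : HasDerivAt ψ ψ' s) :
    HasDerivAt (fun r => F (φ r) (ψ r)) (fderiv ℝ (uncurry F) (φ s, ψ s) (φ', ψ')) s :=
  hF.hasFDerivAt.comp_hasDerivAt (l := uncurry F) s (hφ.prodMk hψ)

lemma pz_eq_fderiv {z t : ℝ} (hF : DifferentiableAt ℝ (uncurry F) (z, t)) :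
    pz F z t = fderiv ℝ (uncurry F) (z, t) (1, 0) :=
  (hasDerivAt_uncurry_comp_fderiv hF (hasDerivAt_id z) (hasDerivAt_const z t)).deriv

lemma pt_eq_fderiv {z t : ℝ} (hF : DifferentiableAt ℝ (uncurry F) (z, t)) :
    pt F z t = fderiv ℝ (uncurry F) (z, t) (0, 1) :=
  (hasDerivAt_uncurry_comp_fderiv hF (hasDerivAt_const t z) (hasDerivAt_id t)).deriv

lemma hasDerivAt_uncurry_comp {φ ψ : ℝ → ℝ} {φ' ψ' s : ℝ}
    (hF : DifferentiableAt ℝ (uncurry F) (φ s, ψ s))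
    (hφ : HasDerivAt φ φ' s) (hψ : HasDerivAt ψ ψ' s) :
    HasDerivAt (fun r => F (φ r) (ψ r))
      (φ' * pz F (φ s) (ψ s) + ψ' * pt F (φ s) (ψ s)) s := by
  convert hasDerivAt_uncurry_comp_fderiv hF hφ hψ using 1
  have hsplit : ((φ', ψ') : ℝ × ℝ) = φ' • ((1 : ℝ), (0 : ℝ)) + ψ' • ((0 : ℝ), (1 : ℝ)) := by
    simp
  rw [hsplit, map_add, map_smul, map_smul, pz_eq_fderiv hF, pt_eq_fderiv hF, smul_eq_mul,
    smul_eq_mul]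

lemma differentiableAt_slice {z t : ℝ} (hF : DifferentiableAt ℝ (uncurry F) (z, t)) :
    DifferentiableAt ℝ (fun s => F s t) z :=
  hF.comp (g := uncurry F) (f := fun s => (s, t)) z
    (differentiableAt_id.prodMk (differentiableAt_const t))

lemma hasDerivAt_pz {z t : ℝ} (hF : DifferentiableAt ℝ (fun s => F s t) z) :
    HasDerivAt (fun s => F s t) (pz F z t) z :=
  hF.hasDerivAt

lemma ContDiff.uncurry_pz {n : WithTop ℕ∞} (hF : ContDiff ℝ (n + 1) (uncurry F)) :
    ContDiff ℝ n (uncurry (pz F)) := by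
  have hd : Differentiable ℝ (uncurry F) := hF.differentiable (by simp)
  have : uncurry (pz F) = fun p => fderiv ℝ (uncurry F) p (1, 0) :=
    funext fun p => pz_eq_fderiv (hd p)
  rw [this]
  exact (hF.fderiv_right le_rfl).clm_apply contDiff_const

lemma ContDiff.uncurry_pt {n : WithTop ℕ∞} (hF : ContDiff ℝ (n + 1) (uncurry F)) :
    ContDiff ℝ n (uncurry (pt F)) := by
  have hd : Differentiable ℝ (uncurry F) := hF.differentiable (by simp)
  have : uncurry (pt F) = fun p => fderiv ℝ (uncurry F) p (0, 1) :=
    funext fun p => pt_eq_fderiv (hd p)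
  rw [this]
  exact (hF.fderiv_right le_rfl).clm_apply contDiff_const

lemma ContDiff.uncurry_burgersOperator {n : WithTop ℕ∞}
    (hF : ContDiff ℝ (n + 1 + 1) (uncurry F)) : ContDiff ℝ n (uncurry (burgersOperator F)) := by
  have hFz := hF.uncurry_pz
  exact ((hF.of_le le_self_add).uncurry_pt.add
    ((hF.of_le (le_add_right le_self_add)).mul (hFz.of_le le_self_add))).add hFz.uncurry_pz

end PartialDerivatives

-- With `A = ξ / η` and `D = ξ' / η` this is the ansatz for `u`; `frame` is the variable `z`.
noncomputable def frame (A β : ℝ → ℝ) (x y t : ℝ) : ℝ := x - A t * y + β t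

noncomputable def reductionAnsatz (c D A β : ℝ → ℝ) (F : ℝ → ℝ → ℝ) : ℝ → ℝ → ℝ → ℝ :=
  fun x y t => -c t * y ^ 2 + D t * y + F (frame A β x y t) t

section ReductionAnsatz

variable {F : ℝ → ℝ → ℝ} {A D β c : ℝ → ℝ}

lemma pdx_eq_deriv_of_eq_comp_frame {v : ℝ → ℝ → ℝ → ℝ} {g : ℝ → ℝ} {y t : ℝ}
    (h : ∀ x, v x y t = g (frame A β x y t)) (x : ℝ) :
    pdx v x y t = deriv g (frame A β x y t) := by
  have hshift : ∀ s, frame A β s y t = s + (β t - A t * y) := fun s => by unfold frame; ring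
  show deriv (fun s => v s y t) x = _
  simp only [h, hshift, deriv_comp_add_const]

lemma hasDerivAt_frame_y (x y t : ℝ) : HasDerivAt (fun s => frame A β x s t) (-A t) y := by
  unfold frame
  simpa using (((hasDerivAt_id y).const_mul (A t)).const_sub x).add_const (β t)

lemma hasDerivAt_frame_t {A' β' t : ℝ} (hA : HasDerivAt A A' t) (hβ : HasDerivAt β β' t)
    (x y : ℝ) : HasDerivAt (fun s => frame A β x y s) (β' - A' * y) t := by
  unfold frame
  exact (((hA.mul_const y).const_sub x).add hβ).congr_deriv (by ring)

lemma pdx_reductionAnsatz (x y t : ℝ) :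
    pdx (reductionAnsatz c D A β F) x y t = pz F (frame A β x y t) t :=
  (pdx_eq_deriv_of_eq_comp_frame (g := fun z => -c t * y ^ 2 + D t * y + F z t)
    (fun _ => rfl) x).trans (deriv_const_add _)

lemma pdx_pdx_reductionAnsatz (x y t : ℝ) :
    pdx (pdx (reductionAnsatz c D A β F)) x y t = pz (pz F) (frame A β x y t) t :=
  pdx_eq_deriv_of_eq_comp_frame (fun x => pdx_reductionAnsatz x y t) x

lemma pdy_reductionAnsatz {x y t : ℝ}
    (hF : DifferentiableAt ℝ (fun z => F z t) (frame A β x y t)) :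
    pdy (reductionAnsatz c D A β F) x y t
      = -2 * c t * y + D t - A t * pz F (frame A β x y t) t := by
  have hquad := ((hasDerivAt_pow 2 y).const_mul (-c t)).add ((hasDerivAt_id y).const_mul (D t))
  have hwave := (hasDerivAt_pz hF).comp y (hasDerivAt_frame_y (A := A) (β := β) x y t)
  refine ((hquad.add hwave).congr_deriv ?_).deriv
  ring

lemma pdy_pdy_reductionAnsatz {x y t : ℝ} (hF : Differentiable ℝ (fun z => F z t))
    (hFz : DifferentiableAt ℝ (fun z => pz F z t) (frame A β x y t)) :
    pdy (pdy (reductionAnsatz c D A β F)) x y t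
      = -2 * c t + A t ^ 2 * pz (pz F) (frame A β x y t) t := by
  have hpdy : (fun s => pdy (reductionAnsatz c D A β F) x s t)
      = fun s => -2 * c t * s + D t - A t * pz F (frame A β x s t) t :=
    funext fun s => pdy_reductionAnsatz (hF _)
  have hlin := ((hasDerivAt_id y).const_mul (-2 * c t)).add_const (D t)
  have hwave :=
    ((hasDerivAt_pz hFz).comp y (hasDerivAt_frame_y (A := A) (β := β) x y t)).const_mul (A t)
  show deriv _ y = _
  rw [hpdy]
  refine ((hlin.sub hwave).congr_deriv ?_).deriv
  ring

lemma pdx_pdy_reductionAnsatz {x y t : ℝ} (hF : Differentiable ℝ (fun z => F z t)) :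
    pdx (pdy (reductionAnsatz c D A β F)) x y t
      = -A t * pz (pz F) (frame A β x y t) t := by
  rw [pdx_eq_deriv_of_eq_comp_frame (g := fun z => -2 * c t * y + D t - A t * pz F z t)
    (fun _ => pdy_reductionAnsatz (hF _)) x, deriv_const_sub, deriv_const_mul_field, neg_mul]
  rfl

lemma pdt_reductionAnsatz {x y t c' D' A' β' : ℝ}
    (hF : DifferentiableAt ℝ (uncurry F) (frame A β x y t, t)) (hc : HasDerivAt c c' t)
    (hD : HasDerivAt D D' t) (hA : HasDerivAt A A' t) (hβ : HasDerivAt β β' t) :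
    pdt (reductionAnsatz c D A β F) x y t
      = -c' * y ^ 2 + D' * y + (β' - A' * y) * pz F (frame A β x y t) t
        + pt F (frame A β x y t) t := by
  have hpoly := (hc.neg.mul_const (y ^ 2)).add (hD.mul_const y)
  have hwave := hasDerivAt_uncurry_comp hF (hasDerivAt_frame_t hA hβ x y) (hasDerivAt_id' t)
  refine ((hpoly.add hwave).congr_deriv ?_).deriv
  ring

lemma pdx_burgers_reductionAnsatz {x y t c' D' A' β' : ℝ}
    (hF : Differentiable ℝ (uncurry F)) (hc : HasDerivAt c c' t)
    (hD : HasDerivAt D D' t) (hA : HasDerivAt A A' t) (hβ : HasDerivAt β β' t)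
    (hFz : DifferentiableAt ℝ (fun z => pz F z t) (frame A β x y t))
    (hE : DifferentiableAt ℝ (fun z => burgersOperator F z t) (frame A β x y t)) :
    pdx (fun x y t => pdt (reductionAnsatz c D A β F) x y t
        + reductionAnsatz c D A β F x y t * pdx (reductionAnsatz c D A β F) x y t
        + pdx (pdx (reductionAnsatz c D A β F)) x y t) x y t
      = (β' - A' * y - c t * y ^ 2 + D t * y) * pz (pz F) (frame A β x y t) t
        + pz (burgersOperator F) (frame A β x y t) t := by
  set L := β' - A' * y - c t * y ^ 2 + D t * y
  set g : ℝ → ℝ := fun z => -c' * y ^ 2 + D' * y + L * pz F z t + burgersOperator F z t with hg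
  have hsplit : ∀ x', pdt (reductionAnsatz c D A β F) x' y t
        + reductionAnsatz c D A β F x' y t * pdx (reductionAnsatz c D A β F) x' y t
        + pdx (pdx (reductionAnsatz c D A β F)) x' y t
      = g (frame A β x' y t) := by
    intro x'
    rw [pdt_reductionAnsatz (hF _) hc hD hA hβ, pdx_reductionAnsatz, pdx_pdx_reductionAnsatz]
    simp only [hg, reductionAnsatz, burgersOperator]
    ring
  rw [pdx_eq_deriv_of_eq_comp_frame hsplit]
  exact ((((hasDerivAt_pz hFz).const_mul L).const_add _).add (hasDerivAt_pz hE)).deriv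

end ReductionAnsatz

lemma hasDerivAt_div_of_deriv_eq_mul {ξ η : ℝ → ℝ} {ξ' b t : ℝ} (hξ : HasDerivAt ξ ξ' t)
    (hη : HasDerivAt η (b * η t) t) (hη0 : η t ≠ 0) :
    HasDerivAt (fun s => ξ s / η s) (ξ' / η t - b * (ξ t / η t)) t :=
  (hξ.div hη hη0).congr_deriv (by field_simp)

theorem stmt9_general (ε : ℝ)
    (b c ξ : ℝ → ℝ)
    (hc : ContDiff ℝ (⊤ : ℕ∞) c)
    (hξ : ContDiff ℝ (⊤ : ℕ∞) ξ)
    (η : ℝ → ℝ) (hη : ContDiff ℝ (⊤ : ℕ∞) η) (hη0 : ∀ t, η t ≠ 0)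
    (hη' : ∀ t, deriv η t = b t * η t)
    (β : ℝ → ℝ) (hβ : ContDiff ℝ (⊤ : ℕ∞) β)
    (hβ' : ∀ t, deriv β t = -ε * (ξ t) ^ 2 / (η t) ^ 2)
    (F : ℝ → ℝ → ℝ)
    (hF : ContDiff ℝ (⊤ : ℕ∞) (fun p : ℝ × ℝ => F p.1 p.2))
    (hFeq : ∀ z t : ℝ,
      pz (fun z t => pt F z t + F z t * pz F z t + pz (pz F) z t) z t = 2 * ε * c t)
    (u : ℝ → ℝ → ℝ → ℝ)
    (hudef : ∀ x y t, u x y t =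
      -c t * y ^ 2 + deriv ξ t / η t * y + F (x - ξ t / η t * y + β t) t) :
    ∀ x y t : ℝ,
      pdx (fun x y t => pdt u x y t + u x y t * pdx u x y t + pdx (pdx u) x y t) x y t
        + ε * pdy (pdy u) x y t + b t * y * pdx (pdy u) x y t
        + c t * y ^ 2 * pdx (pdx u) x y t = 0 := by
  intro x y t
  set A : ℝ → ℝ := fun s => ξ s / η s
  set D : ℝ → ℝ := fun s => deriv ξ s / η s
  obtain rfl : u = reductionAnsatz c D A β F := funext fun x => funext fun y => funext (hudef x y)
  have hF' : ContDiff ℝ (∞ + 1 + 1) (uncurry F) := hF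
  have hFd : Differentiable ℝ (uncurry F) := hF.differentiable (by simp)
  have hFz : Differentiable ℝ (uncurry (pz F)) := hF'.uncurry_pz.differentiable (by simp)
  have hE : Differentiable ℝ (uncurry (burgersOperator F)) :=
    hF'.uncurry_burgersOperator.differentiable (by simp)
  have hA : HasDerivAt A (D t - b t * A t) t :=
    hasDerivAt_div_of_deriv_eq_mul (hξ.differentiable (by simp) t).hasDerivAt
      (hη' t ▸ (hη.differentiable (by simp) t).hasDerivAt) (hη0 t)
  have hβt : HasDerivAt β (-ε * A t ^ 2) t :=
    (hβ.differentiable (by simp) t).hasDerivAt.congr_deriv (by rw [hβ' t]; ring)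
  have hD : HasDerivAt D (deriv D t) t :=
    (((hξ : ContDiff ℝ (∞ + 1) ξ).deriv'.div hη hη0).differentiable (by simp) t).hasDerivAt
  have hFeq' : ∀ z t, pz (burgersOperator F) z t = 2 * ε * c t := hFeq
  rw [pdx_burgers_reductionAnsatz hFd (hc.differentiable (by simp) t).hasDerivAt hD hA hβt
      (differentiableAt_slice (hFz _)) (differentiableAt_slice (hE _)), hFeq',
    pdy_pdy_reductionAnsatz (fun z => differentiableAt_slice (hFd _))
      (differentiableAt_slice (hFz _)),
    pdx_pdy_reductionAnsatz (fun z => differentiableAt_slice (hFd _)), pdx_pdx_reductionAnsatz]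
  ring

theorem stmt9 (ε : ℝ) (hε : ε = 1 ∨ ε = -1)
    (b c ξ : ℝ → ℝ)
    (hb : ContDiff ℝ (⊤ : ℕ∞) b) (hc : ContDiff ℝ (⊤ : ℕ∞) c)
    (hξ : ContDiff ℝ (⊤ : ℕ∞) ξ)
    (η : ℝ → ℝ) (hη : ContDiff ℝ (⊤ : ℕ∞) η) (hη0 : ∀ t, η t ≠ 0)
    (hη' : ∀ t, deriv η t = b t * η t)
    (β : ℝ → ℝ) (hβ : ContDiff ℝ (⊤ : ℕ∞) β)
    (hβ' : ∀ t, deriv β t = -ε * (ξ t) ^ 2 / (η t) ^ 2)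
    (F : ℝ → ℝ → ℝ)
    (hF : ContDiff ℝ (⊤ : ℕ∞) (fun p : ℝ × ℝ => F p.1 p.2))
    (hFeq : ∀ z t : ℝ,
      pz (fun z t => pt F z t + F z t * pz F z t + pz (pz F) z t) z t = 2 * ε * c t)
    (u : ℝ → ℝ → ℝ → ℝ)
    (hudef : ∀ x y t, u x y t =
      -c t * y ^ 2 + deriv ξ t / η t * y + F (x - ξ t / η t * y + β t) t) :
    ∀ x y t : ℝ,
      pdx (fun x y t => pdt u x y t + u x y t * pdx u x y t + pdx (pdx u) x y t) x y t
        + ε * pdy (pdy u) x y t + b t * y * pdx (pdy u) x y t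
        + c t * y ^ 2 * pdx (pdx u) x y t = 0 :=
  stmt9_general ε b c ξ hc hξ η hη hη0 hη' β hβ hβ' F hF hFeq u hudef
end

section
/- Let ε = 1 or ε = -1, let k ∈ ℝ and λ > 0. If u : ℝ × ℝ × (0,∞) → ℝ is smooth and satisfies ∂x(∂t u + u ∂x u + ∂x² u) + ε ∂y² u + (k/t²) y² ∂x² u = 0 for all x, y ∈ ℝ and t > 0, then the function v(x,y,t) := λ^{1/2} u(λ^{1/2} x, λ^{3/4} y, λ t) also satisfies this equation for all x, y ∈ ℝ and t > 0. (This is the finite form of the additional dilational symmetry D = t∂t + (1/2)x∂x + (3/4)y∂y − (1/2)u∂u present in Case 1, b₁ = 0, c₂ = k t^{-2}.) -/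
/-!
Write `v = a u(a x, b y, λ t)` with `a² = λ` and `b² = λ a`. A partial derivative of such a
dilation is again a dilation (`∂x` multiplies the amplitude by `a`, `∂y` by `b`, `∂t` by `λ`), so
every term of the equation for `v` at `(x, y, t)` is `λ²` times the corresponding term for `u` at
`(a x, b y, λ t)`; the coefficient `k / t²` is exactly the one for which the last term scales the
same way. Since `deriv (f (c * ·)) x = c * deriv f (c * x)` holds for every `f`, these rules are
identities between the `deriv`-based operators, valid at every point.
-/

noncomputable section

def dilate (c a b l : ℝ) (w : ℝ → ℝ → ℝ → ℝ) : ℝ → ℝ → ℝ → ℝ :=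
  fun x y t => c * w (a * x) (b * y) (l * t)

def burgersFlux (v : ℝ → ℝ → ℝ → ℝ) : ℝ → ℝ → ℝ → ℝ :=
  fun x y t => pdt v x y t + v x y t * pdx v x y t + pdx (pdx v) x y t

def burgersOp (ε k : ℝ) (v : ℝ → ℝ → ℝ → ℝ) (x y t : ℝ) : ℝ :=
  pdx (burgersFlux v) x y t + ε * pdy (pdy v) x y t + k / t ^ 2 * y ^ 2 * pdx (pdx v) x y t

end

section Dilation

variable (c a b l : ℝ) (w : ℝ → ℝ → ℝ → ℝ)

lemma pdx_dilate : pdx (dilate c a b l w) = dilate (c * a) a b l (pdx w) := by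
  funext x y t
  simp only [pdx, dilate]
  rw [deriv_const_mul_field, deriv_comp_mul_left (f := fun s => w s (b * y) (l * t)),
    smul_eq_mul, mul_assoc]

lemma pdy_dilate : pdy (dilate c a b l w) = dilate (c * b) a b l (pdy w) := by
  funext x y t
  simp only [pdy, dilate]
  rw [deriv_const_mul_field, deriv_comp_mul_left (f := fun s => w (a * x) s (l * t)),
    smul_eq_mul, mul_assoc]

lemma pdt_dilate : pdt (dilate c a b l w) = dilate (c * l) a b l (pdt w) := by
  funext x y t
  simp only [pdt, dilate]
  rw [deriv_const_mul_field, deriv_comp_mul_left (f := fun s => w (a * x) (b * y) s),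
    smul_eq_mul, mul_assoc]

variable {a b l}

lemma burgersFlux_dilate (ha : a * a = l) :
    burgersFlux (dilate a a b l w) = dilate (a * l) a b l (burgersFlux w) := by
  funext x y t
  simp only [burgersFlux, pdt_dilate, pdx_dilate, dilate]
  linear_combination (a * w (a * x) (b * y) (l * t) * pdx w (a * x) (b * y) (l * t)
    + a * pdx (pdx w) (a * x) (b * y) (l * t)) * ha

lemma burgersOp_dilate (ε k : ℝ) (ha : a * a = l) (hb : b * b = l * a) (hl : l ≠ 0)
    (x y t : ℝ) :
    burgersOp ε k (dilate a a b l w) x y t = l ^ 2 * burgersOp ε k w (a * x) (b * y) (l * t) := by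
  simp only [burgersOp, burgersFlux_dilate w ha, pdx_dilate, pdy_dilate, dilate]
  set A := pdx (burgersFlux w) (a * x) (b * y) (l * t)
  set B := pdy (pdy w) (a * x) (b * y) (l * t)
  set C := pdx (pdx w) (a * x) (b * y) (l * t)
  field_simp
  linear_combination l * A * ha + ε * B * (a * hb + l * ha)
    + k * y ^ 2 * C * t⁻¹ ^ 2 * (a * ha - hb)

end Dilation

theorem stmt11_general (ε : ℝ) (k : ℝ) (lam : ℝ) (hlam : 0 < lam)
    (u : ℝ → ℝ → ℝ → ℝ)
    (heq : ∀ x y t : ℝ, 0 < t →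
      pdx (fun x y t => pdt u x y t + u x y t * pdx u x y t + pdx (pdx u) x y t) x y t
        + ε * pdy (pdy u) x y t + k / t ^ 2 * y ^ 2 * pdx (pdx u) x y t = 0) :
    ∀ x y t : ℝ, 0 < t →
      (fun v : ℝ → ℝ → ℝ → ℝ =>
        pdx (fun x y t => pdt v x y t + v x y t * pdx v x y t + pdx (pdx v) x y t) x y t
          + ε * pdy (pdy v) x y t + k / t ^ 2 * y ^ 2 * pdx (pdx v) x y t = 0)
      (fun x y t => lam ^ ((1 : ℝ) / 2) *
        u (lam ^ ((1 : ℝ) / 2) * x) (lam ^ ((3 : ℝ) / 4) * y) (lam * t)) := by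
  intro x y t ht
  have ha : lam ^ ((1 : ℝ) / 2) * lam ^ ((1 : ℝ) / 2) = lam := by
    rw [← Real.rpow_add hlam]; norm_num
  have hb : lam ^ ((3 : ℝ) / 4) * lam ^ ((3 : ℝ) / 4) = lam * lam ^ ((1 : ℝ) / 2) := by
    rw [← Real.rpow_add hlam, ← Real.rpow_one_add' hlam.le (by norm_num)]; norm_num
  change burgersOp ε k (dilate _ _ _ lam u) x y t = 0
  rw [burgersOp_dilate u ε k ha hb hlam.ne', show burgersOp ε k u _ _ _ = 0 from
    heq _ _ _ (mul_pos hlam ht), mul_zero]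

theorem stmt11 (ε : ℝ) (hε : ε = 1 ∨ ε = -1) (k : ℝ) (lam : ℝ) (hlam : 0 < lam)
    (u : ℝ → ℝ → ℝ → ℝ)
    (hu : ContDiffOn ℝ (⊤ : ℕ∞) (fun p : ℝ × ℝ × ℝ => u p.1 p.2.1 p.2.2)
      {p : ℝ × ℝ × ℝ | 0 < p.2.2})
    (heq : ∀ x y t : ℝ, 0 < t →
      pdx (fun x y t => pdt u x y t + u x y t * pdx u x y t + pdx (pdx u) x y t) x y t
        + ε * pdy (pdy u) x y t + k / t ^ 2 * y ^ 2 * pdx (pdx u) x y t = 0) :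
    ∀ x y t : ℝ, 0 < t →
      (fun v : ℝ → ℝ → ℝ → ℝ =>
        pdx (fun x y t => pdt v x y t + v x y t * pdx v x y t + pdx (pdx v) x y t) x y t
          + ε * pdy (pdy v) x y t + k / t ^ 2 * y ^ 2 * pdx (pdx v) x y t = 0)
      (fun x y t => lam ^ ((1 : ℝ) / 2) *
        u (lam ^ ((1 : ℝ) / 2) * x) (lam ^ ((3 : ℝ) / 4) * y) (lam * t)) :=
  stmt11_general ε k lam hlam u heq
end
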